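/- The function φ(x,y) = (1/4)[x² + (y - x + x³)²][x² + (y - x + x³)² - 2] is non-increasing along trajectories of the system ẋ = y, ẏ = -(4x² - 1)y - x + x³ - x⁵: its derivative along the flow is -r²(1 - r²)²cos²θ ≤ 0 where r² = x² + (y - x + x³)² and r cos θ = x. -/

import Mathlib

/-! In the coordinates `u = x`, `v = y - x + x³` the system reads `u̇ = v + u - u³`,
`v̇ = -u - u²v`, so `R = u² + v²` satisfies `Ṙ = 2u²(1 - R)`. Since `φ = R(R - 2)/4` has
`dφ/dR = (R - 1)/2`, the orbital derivative of `φ` is `-u²(1 - R)²`. -/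

theorem HasDerivAt.quarter_mul_sub_two {g : ℝ → ℝ} {g' t : ℝ} (hg : HasDerivAt g g' t) :
    HasDerivAt (fun s => 1 / 4 * g s * (g s - 2)) ((g t - 1) / 2 * g') t :=
  ((hg.const_mul (1 / 4)).mul (hg.sub_const 2)).congr_deriv (by ring)

def lienardRadiusSq (x y : ℝ) : ℝ := x ^ 2 + (y - x + x ^ 3) ^ 2

theorem hasDerivAt_lienardRadiusSq_fst (x y : ℝ) :
    HasDerivAt (fun s => lienardRadiusSq s y)
      (2 * x + 2 * (y - x + x ^ 3) * (3 * x ^ 2 - 1)) x := by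
  have hv : HasDerivAt (fun s : ℝ => y - s + s ^ 3) (3 * x ^ 2 - 1) x :=
    (((hasDerivAt_const x y).sub (hasDerivAt_id x)).add (hasDerivAt_pow 3 x)).congr_deriv
      (by push_cast; ring)
  exact ((hasDerivAt_pow 2 x).add (hv.pow 2)).congr_deriv (by push_cast; ring)

theorem hasDerivAt_lienardRadiusSq_snd (x y : ℝ) :
    HasDerivAt (fun s => lienardRadiusSq x s) (2 * (y - x + x ^ 3)) y :=
  ((((hasDerivAt_id y).sub_const x).add_const (x ^ 3)).pow 2 |>.const_add (x ^ 2)).congr_deriv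
    (by simp)

theorem lienardRadiusSq_orbital_deriv (x y : ℝ) :
    (2 * x + 2 * (y - x + x ^ 3) * (3 * x ^ 2 - 1)) * y
        + 2 * (y - x + x ^ 3) * (-(4 * x ^ 2 - 1) * y - x + x ^ 3 - x ^ 5)
      = 2 * x ^ 2 * (1 - lienardRadiusSq x y) := by
  unfold lienardRadiusSq
  ring

/-- φ(x,y) = (1/4)[x² + (y-x+x³)²][x² + (y-x+x³)² - 2] is non-increasing along
trajectories of ẋ = y, ẏ = -(4x²-1)y - x + x³ - x⁵: its orbital derivative is
-r²(1-r²)²cos²θ = -x²(1-r²)² ≤ 0, where r² = x² + (y-x+x³)² and r cos θ = x. -/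
theorem lyapunov_nonincreasing_lienard
    (φ : ℝ → ℝ → ℝ)
    (hφ : ∀ x y, φ x y =
      (1/4) * (x^2 + (y - x + x^3)^2) * (x^2 + (y - x + x^3)^2 - 2)) :
    ∀ x y : ℝ,
      deriv (fun s => φ s y) x * y
        + deriv (fun s => φ x s) y * (-(4*x^2 - 1) * y - x + x^3 - x^5)
        = -(x^2 * (1 - (x^2 + (y - x + x^3)^2))^2) ∧
      -(x^2 * (1 - (x^2 + (y - x + x^3)^2))^2) ≤ 0 := by
  intro x y
  have hφR : φ = fun x y => 1 / 4 * lienardRadiusSq x y * (lienardRadiusSq x y - 2) :=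
    funext₂ hφ
  have hx := (hasDerivAt_lienardRadiusSq_fst x y).quarter_mul_sub_two
  have hy := (hasDerivAt_lienardRadiusSq_snd x y).quarter_mul_sub_two
  refine ⟨?_, neg_nonpos.mpr (by positivity)⟩
  subst hφR
  rw [hx.deriv, hy.deriv]
  change _ = -(x ^ 2 * (1 - lienardRadiusSq x y) ^ 2)
  linear_combination (lienardRadiusSq x y - 1) / 2 * lienardRadiusSq_orbital_deriv x y
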